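/- Every 2-program P with n ≥ 1 atoms has at most g_n stable models, where g_1 = 1, g_n = 3^{n/3} if n ≡ 0 (mod 3), g_n = 4 · 3^{(n−4)/3} if n ≡ 1 (mod 3) and n > 1, and g_n = 2 · 3^{(n−2)/3} if n ≡ 2 (mod 3). -/
import Mathlib


/-- A clause of a propositional logic program: an optional head (a definite
clause if `head = some h`, a constraint if `head = none`), a positive body
and a negative body. -/
structure LPClause (α : Type) where
  head : Option α
  pos : Finset α
  neg : Finset α
deriving DecidableEq

/-- A program is a finite set of clauses. -/
abbrev LPProgram (α : Type) := Finset (LPClause α)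

/-- The atoms occurring in a clause. -/
def LPClause.atoms {α : Type} [DecidableEq α] (c : LPClause α) : Finset α :=
  c.head.toFinset ∪ c.pos ∪ c.neg

/-- The atoms occurring in a program. -/
def LPProgram.atoms {α : Type} [DecidableEq α] (P : LPProgram α) : Finset α :=
  P.sup LPClause.atoms

/-- `N` is closed under the Horn rules of the reduct `P^M`: for every definite
clause of `P` whose negative body is disjoint from `M`, if its positive body
is contained in `N` then so is its head. -/
def ClosedUnder {α : Type} (P : LPProgram α) (M : Finset α) (N : Set α) : Prop :=
  ∀ c ∈ P, ∀ h : α, c.head = some h → (∀ b ∈ c.neg, b ∉ M) →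
    (↑c.pos : Set α) ⊆ N → h ∈ N

/-- `M` is a stable model of `P`: `M` is the least set closed under the rules
of the reduct `P^M` (i.e. `M = lm(P^M)`), and `M` satisfies every constraint
of `P`. -/
def IsStable {α : Type} (P : LPProgram α) (M : Finset α) : Prop :=
  ClosedUnder P M ↑M ∧ (∀ N : Set α, ClosedUnder P M N → ↑M ⊆ N) ∧
  ∀ c ∈ P, c.head = none → ¬(c.pos ⊆ M ∧ ∀ b ∈ c.neg, b ∉ M)

/-- `P` is a `t`-program: every clause has at most `t` literals, counting the head. -/
def IsTProgram {α : Type} (P : LPProgram α) (t : ℕ) : Prop :=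
  ∀ c ∈ P, c.pos.card + c.neg.card + (c.head.elim 0 fun _ => 1) ≤ t

/-- The exact bound `g n` on the number of stable models of a 2-program with
`n` atoms: `g 1 = 1`, `g n = 3^(n/3)` if `n ≡ 0 (mod 3)`,
`g n = 4 * 3^((n-4)/3)` if `n ≡ 1 (mod 3)` and `n > 1`, and
`g n = 2 * 3^((n-2)/3)` if `n ≡ 2 (mod 3)`. -/
def g (n : ℕ) : ℕ :=
  if n = 1 then 1
  else if n % 3 = 0 then 3 ^ (n / 3)
  else if n % 3 = 1 then 4 * 3 ^ ((n - 4) / 3)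
  else 2 * 3 ^ ((n - 2) / 3)

lemma g_zero : g 0 = 1 := by decide

lemma g_step (n : ℕ) (hn : n ≠ 1) : g (n + 3) = 3 * g n := by
  have h3 : n % 3 = 0 ∨ n % 3 = 1 ∨ n % 3 = 2 := by omega
  have hne : n + 3 ≠ 1 := by omega
  rcases h3 with h | h | h
  · have e1 : (n+3) % 3 = 0 := by omega
    have e2 : (n+3)/3 = n/3 + 1 := by omega
    simp only [g, if_neg hn, if_neg hne, e1, h, if_pos rfl, e2, pow_succ, if_true]
    ring
  · have h4 : 4 ≤ n := by omega
    have e1 : (n+3) % 3 = 1 := by omega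
    have e2 : (n+3-4)/3 = (n-4)/3 + 1 := by omega
    simp only [g, if_neg hn, if_neg hne, e1, h, if_neg (by omega : ¬(1=0)), if_pos rfl, e2,
      pow_succ, if_true]
    ring
  · have e1 : (n+3) % 3 = 2 := by omega
    have e2 : (n+3-2)/3 = (n-2)/3 + 1 := by omega
    simp only [g, if_neg hn, if_neg hne, e1, h, if_neg (by omega : ¬(2=0)),
      if_neg (by omega : ¬(2=1)), e2, pow_succ, if_true]
    ring

lemma g_aux : ∀ n, g n ≤ g (n+1) ∧ 2 * g n ≤ g (n+2) ∧ 3 * g n ≤ g (n+3) := by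
  intro n
  induction n using Nat.strong_induction_on with
  | _ n ih =>
    match n with
    | 0 => refine ⟨?_, ?_, ?_⟩ <;> decide
    | 1 => refine ⟨?_, ?_, ?_⟩ <;> decide
    | 2 => refine ⟨?_, ?_, ?_⟩ <;> decide
    | 3 => refine ⟨?_, ?_, ?_⟩ <;> decide
    | 4 => refine ⟨?_, ?_, ?_⟩ <;> decide
    | (m+5) =>
      obtain ⟨h1, h2, h3⟩ := ih (m+2) (by omega)
      have e1 : g (m+5) = 3 * g (m+2) := g_step (m+2) (by omega)
      have e2 : g (m+6) = 3 * g (m+3) := g_step (m+3) (by omega)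
      have e3 : g (m+7) = 3 * g (m+4) := g_step (m+4) (by omega)
      have e4 : g (m+8) = 3 * g (m+5) := g_step (m+5) (by omega)
      refine ⟨?_, ?_, ?_⟩
      · rw [show m+5+1 = m+6 by ring, e1, e2]
        exact Nat.mul_le_mul_left 3 h1
      · rw [show m+5+2 = m+7 by ring, e1, e3]
        calc 2 * (3 * g (m+2)) = 3 * (2 * g (m+2)) := by ring
        _ ≤ 3 * g (m+4) := Nat.mul_le_mul_left 3 (by simpa using h2)
      · rw [show m+5+3 = m+8 by ring, e4]

lemma g_mono : Monotone g := monotone_nat_of_le_succ (fun n => (g_aux n).1)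

lemma g_star : ∀ d m, d + 1 ≤ m → (d+1) * g (m - 1 - d) ≤ g m := by
  intro d
  induction d using Nat.strong_induction_on with
  | _ d ih =>
    intro m hm
    match d with
    | 0 => simpa using g_mono (show m - 1 - 0 ≤ m by omega)
    | 1 =>
      have h := (g_aux (m-2)).2.1
      rw [show m-2+2 = m by omega] at h
      simpa [show m-1-1 = m-2 by omega] using h
    | 2 =>
      have h := (g_aux (m-3)).2.2
      rw [show m-3+3 = m by omega] at h
      simpa [show m-1-2 = m-3 by omega] using h
    | 3 =>
      have h1 := (g_aux (m-4)).2.1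
      rw [show m-4+2 = m-2 by omega] at h1
      have h2 := (g_aux (m-2)).2.1
      rw [show m-2+2 = m by omega] at h2
      have : (3+1) * g (m-1-3) = 2 * (2 * g (m-4)) := by
        rw [show m-1-3 = m-4 by omega]; ring
      rw [this]
      calc 2 * (2 * g (m-4)) ≤ 2 * g (m-2) := Nat.mul_le_mul_left 2 h1
      _ ≤ g m := h2
    | (e+4) =>
      have h2 := ih (e+1) (by omega) (m-3) (by omega)
      rw [show (m-3) - 1 - (e+1) = m - 1 - (e+4) by omega] at h2
      have h3 := (g_aux (m-3)).2.2
      rw [show m-3+3 = m by omega] at h3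
      calc (e+4+1) * g (m-1-(e+4)) ≤ (3*(e+2)) * g (m-1-(e+4)) :=
            Nat.mul_le_mul_right _ (by omega)
      _ = 3 * ((e+1+1) * g (m-1-(e+4))) := by ring
      _ ≤ 3 * g (m-3) := Nat.mul_le_mul_left 3 h2
      _ ≤ g m := h3

section Ker
variable {α : Type} [DecidableEq α]

/-- `T` is a kernel of the digraph `E` restricted to vertex set `V`. -/
def IsKer (E : α → α → Prop) (V T : Finset α) : Prop :=
  T ⊆ V ∧ ∀ y ∈ V, (y ∈ T ↔ ∀ x ∈ T, ¬ E x y)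

open Classical in
/-- The finset of kernels of `E` on `V`. -/
noncomputable def Kf (E : α → α → Prop) (V : Finset α) : Finset (Finset α) :=
  V.powerset.filter (fun T => IsKer E V T)

omit [DecidableEq α] in
lemma mem_Kf {E : α → α → Prop} {V T : Finset α} : T ∈ Kf E V ↔ IsKer E V T := by
  classical
  simp only [Kf, Finset.mem_filter, Finset.mem_powerset, and_iff_right_iff_imp]
  · exact fun h => h.1

lemma ker_count (E : α → α → Prop) : ∀ n (V : Finset α), V.card ≤ n → (Kf E V).card ≤ g V.card := by
  classical
  intro n
  induction n with
  | zero =>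
    intro V hV
    have hV0 : V = ∅ := Finset.card_eq_zero.mp (Nat.le_zero.mp hV)
    subst hV0
    have : Kf E (∅ : Finset α) ⊆ {∅} := by
      intro T hT
      have := (mem_Kf.mp hT).1
      simp only [Finset.subset_empty] at this
      simp [this]
    calc (Kf E (∅:Finset α)).card ≤ ({∅} : Finset (Finset α)).card := Finset.card_le_card this
    _ = 1 := rfl
    _ ≤ g 0 := by rw [g_zero]
    _ = g (∅:Finset α).card := by simp
  | succ n ih =>
    intro V hV
    rcases V.eq_empty_or_nonempty with rfl | hne
    · have : Kf E (∅ : Finset α) ⊆ {∅} := by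
        intro T hT
        have := (mem_Kf.mp hT).1
        simp only [Finset.subset_empty] at this
        simp [this]
      calc (Kf E (∅:Finset α)).card ≤ 1 := Finset.card_le_card this
      _ ≤ g 0 := by rw [g_zero]
      _ = g (∅:Finset α).card := by simp
    · -- N u : the (undirected) neighbourhood of u in V, excluding u
      set Nb : α → Finset α := fun u => (V.erase u).filter (fun w => E w u ∨ E u w) with hNb
      obtain ⟨v, hvV, hvmin⟩ := V.exists_min_image (fun u => (Nb u).card) hne
      set d := (Nb v).card with hd
      set U : Finset α := insert v ((V.filter (fun u => E u v)).erase v) with hU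
      have hUV : U ⊆ V := by
        intro u hu
        rw [hU, Finset.mem_insert] at hu
        rcases hu with rfl | hu
        · exact hvV
        · exact (Finset.mem_filter.mp (Finset.mem_of_mem_erase hu)).1
      -- every kernel contains some element of U
      have hcov : Kf E V ⊆ U.biUnion (fun u => (Kf E V).filter (fun T => u ∈ T)) := by
        intro T hT
        obtain ⟨hTV, hiff⟩ := mem_Kf.mp hT
        by_cases hvT : v ∈ T
        · exact Finset.mem_biUnion.mpr ⟨v, Finset.mem_insert_self _ _,
            Finset.mem_filter.mpr ⟨hT, hvT⟩⟩
        · have : ¬ ∀ x ∈ T, ¬ E x v := fun h => hvT ((hiff v hvV).mpr h)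
          push_neg at this
          obtain ⟨x, hxT, hxE⟩ := this
          have hxv : x ≠ v := fun h => hvT (h ▸ hxT)
          have hxU : x ∈ U := by
            rw [hU, Finset.mem_insert]
            right
            exact Finset.mem_erase.mpr ⟨hxv, Finset.mem_filter.mpr ⟨hTV hxT, hxE⟩⟩
          exact Finset.mem_biUnion.mpr ⟨x, hxU, Finset.mem_filter.mpr ⟨hT, hxT⟩⟩
      -- per-element bound
      have hper : ∀ u ∈ U, ((Kf E V).filter (fun T => u ∈ T)).card ≤ g (V.card - 1 - d) := by
        intro u hu
        have huV : u ∈ V := hUV hu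
        set V' : Finset α := V \ insert u (Nb u) with hV'
        -- injection T ↦ T.erase u
        have hmaps : ∀ T ∈ (Kf E V).filter (fun T => u ∈ T), T.erase u ∈ Kf E V' := by
          intro T hT
          obtain ⟨hTk, huT⟩ := Finset.mem_filter.mp hT
          obtain ⟨hTV, hiff⟩ := mem_Kf.mp hTk
          have hTerase : T.erase u ⊆ V' := by
            intro y hy
            obtain ⟨hyu, hyT⟩ := Finset.mem_erase.mp hy
            rw [hV', Finset.mem_sdiff]
            refine ⟨hTV hyT, ?_⟩
            intro hyN
            rw [Finset.mem_insert] at hyN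
            rcases hyN with rfl | hyN
            · exact hyu rfl
            · obtain ⟨-, hEy⟩ := Finset.mem_filter.mp hyN
              rcases hEy with h1 | h2
              · exact ((hiff u huV).mp huT) y hyT h1
              · exact ((hiff y (hTV hyT)).mp hyT) u huT h2
          refine mem_Kf.mpr ⟨hTerase, ?_⟩
          intro y hy
          rw [hV', Finset.mem_sdiff, Finset.mem_insert] at hy
          obtain ⟨hyV, hyN⟩ := hy
          push_neg at hyN
          obtain ⟨hyu, hyNb⟩ := hyN
          have hyTiff := hiff y hyV
          constructor
          · intro hyTe x hxTe
            exact (hyTiff.mp (Finset.mem_of_mem_erase hyTe)) x (Finset.mem_of_mem_erase hxTe)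
          · intro hall
            refine Finset.mem_erase.mpr ⟨hyu, hyTiff.mpr ?_⟩
            intro x hxT
            by_cases hxu : x = u
            · subst hxu
              intro hExy
              exact hyNb (Finset.mem_filter.mpr ⟨Finset.mem_erase.mpr ⟨hyu, hyV⟩, Or.inr hExy⟩)
            · exact hall x (Finset.mem_erase.mpr ⟨hxu, hxT⟩)
        have hinj : Set.InjOn (fun T => Finset.erase T u)
            ((Kf E V).filter (fun T => u ∈ T) : Finset (Finset α)) := by
          intro T1 h1 T2 h2 he
          have hu1 : u ∈ T1 := (Finset.mem_filter.mp h1).2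
          have hu2 : u ∈ T2 := (Finset.mem_filter.mp h2).2
          have : insert u (T1.erase u) = insert u (T2.erase u) := by
            simp only at he; rw [he]
          rwa [Finset.insert_erase hu1, Finset.insert_erase hu2] at this
        have hcard1 : ((Kf E V).filter (fun T => u ∈ T)).card ≤ (Kf E V').card :=
          Finset.card_le_card_of_injOn _ hmaps hinj
        -- size of V'
        have hNbV : insert u (Nb u) ⊆ V := by
          intro x hx
          rw [Finset.mem_insert] at hx
          rcases hx with rfl | hx
          · exact huV
          · exact Finset.mem_of_mem_erase (Finset.mem_filter.mp hx).1
        have huNb : u ∉ Nb u := fun h => (Finset.mem_erase.mp (Finset.mem_filter.mp h).1).1 rfl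
        have hV'card : V'.card = V.card - ((Nb u).card + 1) := by
          rw [hV', Finset.card_sdiff_of_subset hNbV, Finset.card_insert_of_notMem huNb]
        have hdu : d ≤ (Nb u).card := hvmin u huV
        have hV'lt : V'.card ≤ n := by
          have hVpos : 1 ≤ V.card := Finset.card_pos.mpr hne
          omega
        calc ((Kf E V).filter (fun T => u ∈ T)).card ≤ (Kf E V').card := hcard1
        _ ≤ g V'.card := ih V' hV'lt
        _ ≤ g (V.card - 1 - d) := g_mono (by omega)
      -- put it together
      have hUcard : U.card ≤ d + 1 := by
        have h1 : (V.filter (fun u => E u v)).erase v ⊆ Nb v := by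
          intro x hx
          obtain ⟨hxv, hxf⟩ := Finset.mem_erase.mp hx
          obtain ⟨hxV, hExv⟩ := Finset.mem_filter.mp hxf
          exact Finset.mem_filter.mpr ⟨Finset.mem_erase.mpr ⟨hxv, hxV⟩, Or.inl hExv⟩
        calc U.card ≤ ((V.filter (fun u => E u v)).erase v).card + 1 :=
          Finset.card_insert_le _ _
        _ ≤ d + 1 := by
          have := Finset.card_le_card h1
          omega
      have hdV : d + 1 ≤ V.card := by
        have : Nb v ⊆ V.erase v := Finset.filter_subset _ _
        have h1 := Finset.card_le_card this
        rw [Finset.card_erase_of_mem hvV] at h1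
        have hVpos : 1 ≤ V.card := Finset.card_pos.mpr hne
        omega
      calc (Kf E V).card ≤ (U.biUnion (fun u => (Kf E V).filter (fun T => u ∈ T))).card :=
            Finset.card_le_card hcov
      _ ≤ ∑ u ∈ U, ((Kf E V).filter (fun T => u ∈ T)).card := Finset.card_biUnion_le
      _ ≤ ∑ _u ∈ U, g (V.card - 1 - d) := Finset.sum_le_sum hper
      _ = U.card * g (V.card - 1 - d) := by rw [Finset.sum_const, smul_eq_mul]
      _ ≤ (d+1) * g (V.card - 1 - d) := Nat.mul_le_mul_right _ hUcard
      _ ≤ g V.card := g_star d V.card hdV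

end Ker

set_option linter.unusedSectionVars false
section PartA
variable {α : Type} [DecidableEq α] (P : LPProgram α)

/-- The least model of the reduct `P^S`, as the intersection of all closed sets. -/
def Phi (S : Finset α) : Set α := ⋂₀ {N : Set α | ClosedUnder P S N}

variable {P}

lemma Phi_subset {S : Finset α} {N : Set α} (hN : ClosedUnder P S N) : Phi P S ⊆ N :=
  Set.sInter_subset_of_mem hN

lemma closed_Phi (S : Finset α) : ClosedUnder P S (Phi P S) := by
  intro c hc h hh hneg hpos
  intro N hN
  exact hN c hc h hh hneg (hpos.trans (Phi_subset hN))

lemma Phi_anti {S S' : Finset α} (hss : S ⊆ S') : Phi P S' ⊆ Phi P S := by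
  apply Set.sInter_subset_sInter
  intro N hN
  intro c hc h hh hneg hpos
  exact hN c hc h hh (fun b hb hbS => hneg b hb (hss hbS)) hpos

lemma clause_atoms_subset {c : LPClause α} (hc : c ∈ P) : c.atoms ⊆ P.atoms :=
  Finset.le_sup (f := LPClause.atoms) hc

lemma Phi_subset_atoms (S : Finset α) : Phi P S ⊆ ↑P.atoms := by
  apply Phi_subset
  intro c hc h hh _ _
  have : h ∈ c.atoms := by
    simp only [LPClause.atoms, Finset.mem_union, Option.mem_toFinset]
    left; left; simp [hh]
  exact clause_atoms_subset hc this

lemma stable_eq_Phi {M : Finset α} (hM : IsStable P M) : (↑M : Set α) = Phi P M := by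
  apply subset_antisymm
  · intro a ha
    rw [Phi, Set.mem_sInter]
    intro N hN
    exact hM.2.1 N hN ha
  · exact Phi_subset hM.1

lemma decomp (h2 : IsTProgram P 2) (M : Finset α) :
    Phi P M ⊆ Phi P P.atoms ∪ ⋃ x ∈ (P.atoms \ M), Phi P (P.atoms.erase x) := by
  apply Phi_subset
  intro c hc h hh hneg hpos
  have hcard := h2 c hc
  rw [hh] at hcard
  simp only [Option.elim] at hcard
  have hsum : c.pos.card + c.neg.card ≤ 1 := by omega
  by_cases hnegE : c.neg = ∅
  · by_cases hposE : c.pos = ∅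
    · left
      apply closed_Phi (P := P) P.atoms c hc h hh
      · intro b hb; rw [hnegE] at hb; simp at hb
      · rw [hposE]; simp
    · -- c.pos is a singleton {b}
      have hpos1 : c.pos.card = 1 := by
        have h1 : 1 ≤ c.pos.card := Finset.card_pos.mpr (Finset.nonempty_iff_ne_empty.mpr hposE)
        omega
      obtain ⟨b, hb⟩ := Finset.card_eq_one.mp hpos1
      have hbR : b ∈ Phi P P.atoms ∪ ⋃ x ∈ (P.atoms \ M), Phi P (P.atoms.erase x) := by
        apply hpos
        rw [hb]; simp
      rcases hbR with hb1 | hb2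
      · left
        apply closed_Phi (P := P) P.atoms c hc h hh
        · intro b' hb'; rw [hnegE] at hb'; simp at hb'
        · rw [hb]; intro y hy; simp only [Finset.coe_singleton, Set.mem_singleton_iff] at hy
          subst hy; exact hb1
      · simp only [Set.mem_iUnion, exists_prop] at hb2
        obtain ⟨x, hx, hbx⟩ := hb2
        right
        simp only [Set.mem_iUnion, exists_prop]
        refine ⟨x, hx, ?_⟩
        apply closed_Phi (P := P) (P.atoms.erase x) c hc h hh
        · intro b' hb'; rw [hnegE] at hb'; simp at hb'
        · rw [hb]; intro y hy; simp only [Finset.coe_singleton, Set.mem_singleton_iff] at hy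
          subst hy; exact hbx
  · -- c.neg is a singleton {b}, c.pos = ∅
    have hneg1 : c.neg.card = 1 := by
      have h1 : 1 ≤ c.neg.card := Finset.card_pos.mpr (Finset.nonempty_iff_ne_empty.mpr hnegE)
      omega
    have hposE : c.pos = ∅ := by
      rw [← Finset.card_eq_zero]; omega
    obtain ⟨b, hb⟩ := Finset.card_eq_one.mp hneg1
    have hbM : b ∉ M := hneg b (by rw [hb]; exact Finset.mem_singleton_self b)
    have hbA : b ∈ P.atoms := by
      apply clause_atoms_subset hc
      simp only [LPClause.atoms, Finset.mem_union]
      right; rw [hb]; exact Finset.mem_singleton_self b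
    right
    simp only [Set.mem_iUnion, exists_prop]
    refine ⟨b, Finset.mem_sdiff.mpr ⟨hbA, hbM⟩, ?_⟩
    apply closed_Phi (P := P) (P.atoms.erase b) c hc h hh
    · intro b' hb'
      rw [hb, Finset.mem_singleton] at hb'
      subst hb'
      exact Finset.notMem_erase b' P.atoms
    · rw [hposE]; simp

lemma stable_union (h2 : IsTProgram P 2) {M : Finset α} (hM : IsStable P M) :
    (↑M : Set α) = Phi P P.atoms ∪ ⋃ x ∈ (P.atoms \ M), Phi P (P.atoms.erase x) := by
  have hMA : M ⊆ P.atoms := by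
    intro a ha
    have : (a : α) ∈ Phi P M := (stable_eq_Phi hM) ▸ (by exact_mod_cast ha)
    exact_mod_cast Phi_subset_atoms M this
  apply subset_antisymm
  · rw [stable_eq_Phi hM]; exact decomp h2 M
  · apply Set.union_subset
    · rw [stable_eq_Phi hM]; exact Phi_anti hMA
    · simp only [Set.iUnion_subset_iff]
      intro x hx
      rw [stable_eq_Phi hM]
      apply Phi_anti
      intro a ha
      refine Finset.mem_erase.mpr ⟨?_, hMA ha⟩
      intro h; subst h
      exact (Finset.mem_sdiff.mp hx).2 ha

end PartA

/-- Every 2-program with `n ≥ 1` atoms has at most `g n` stable models. -/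
theorem stmt_12 {α : Type} [DecidableEq α] (P : LPProgram α)
    (h2 : IsTProgram P 2) (hn : 1 ≤ P.atoms.card) :
    {M : Finset α | IsStable P M}.ncard ≤ g P.atoms.card := by
  classical
  set A := P.atoms with hA
  set V : Finset α := A.filter (fun y => y ∉ Phi P A) with hV
  set E : α → α → Prop := fun x y => y ∈ Phi P (A.erase x) with hE
  have hVA : V ⊆ A := Finset.filter_subset _ _
  have hsub : ∀ M : Finset α, IsStable P M → M ⊆ A := by
    intro M hM a ha
    have : (a : α) ∈ Phi P M := (stable_eq_Phi hM) ▸ (by exact_mod_cast ha)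
    exact_mod_cast Phi_subset_atoms M this
  have hfacts : ∀ M : Finset α, IsStable P M → A \ M = V \ M := by
    intro M hM
    ext x
    simp only [Finset.mem_sdiff, hV, Finset.mem_filter]
    constructor
    · rintro ⟨hxA, hxM⟩
      refine ⟨⟨hxA, ?_⟩, hxM⟩
      intro hxPhi
      have : x ∈ Phi P M := Phi_anti (hsub M hM) hxPhi
      rw [← stable_eq_Phi hM] at this
      exact hxM (by exact_mod_cast this)
    · rintro ⟨⟨hxA, _⟩, hxM⟩
      exact ⟨hxA, hxM⟩
  have hker : ∀ M : Finset α, IsStable P M → (V \ M) ∈ Kf E V := by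
    intro M hM
    have hU := stable_union h2 hM
    refine mem_Kf.mpr ⟨Finset.sdiff_subset, ?_⟩
    intro y hy
    obtain ⟨hyA, hyPhi⟩ := Finset.mem_filter.mp hy
    constructor
    · intro hyVM x hxVM hExy
      have hyM : y ∉ M := (Finset.mem_sdiff.mp hyVM).2
      have hxAM : x ∈ A \ M := by rw [hfacts M hM]; exact hxVM
      have : y ∈ (↑M : Set α) := by
        rw [hU]
        right
        simp only [Set.mem_iUnion, exists_prop]
        exact ⟨x, hxAM, hExy⟩
      exact hyM (by exact_mod_cast this)
    · intro hall
      refine Finset.mem_sdiff.mpr ⟨hy, ?_⟩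
      intro hyM
      have : y ∈ (↑M : Set α) := by exact_mod_cast hyM
      rw [hU] at this
      rcases this with hc1 | hc2
      · exact hyPhi hc1
      · simp only [Set.mem_iUnion, exists_prop] at hc2
        obtain ⟨x, hxAM, hyx⟩ := hc2
        have hxVM : x ∈ V \ M := by rw [← hfacts M hM]; exact hxAM
        exact hall x hxVM hyx
  have hinj : Set.InjOn (fun M => V \ M) {M : Finset α | IsStable P M} := by
    intro M1 hM1 M2 hM2 he
    simp only [Set.mem_setOf_eq] at hM1 hM2
    simp only at he
    have hAM : A \ M1 = A \ M2 := by rw [hfacts M1 hM1, hfacts M2 hM2, he]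
    have hcoe : (↑M1 : Set α) = ↑M2 := by
      rw [stable_union h2 hM1, stable_union h2 hM2, hAM]
    exact Finset.coe_injective hcoe
  have hfin : (↑(Kf E V) : Set (Finset α)).Finite := (Kf E V).finite_toSet
  have hmaps : ∀ M ∈ {M : Finset α | IsStable P M},
      (fun M => V \ M) M ∈ (↑(Kf E V) : Set (Finset α)) := by
    intro M hM
    exact_mod_cast hker M hM
  calc {M : Finset α | IsStable P M}.ncard
      ≤ (↑(Kf E V) : Set (Finset α)).ncard :=
        Set.ncard_le_ncard_of_injOn _ hmaps hinj hfin
    _ = (Kf E V).card := Set.ncard_coe_finset _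
    _ ≤ g V.card := ker_count E V.card V le_rfl
    _ ≤ g A.card := g_mono (Finset.card_le_card hVA)
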